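/- Let A, B ∈ B(H) be self-adjoint operators whose spectra are contained in an interval J, and let f : J → ℝ be a continuously differentiable convex function. Set γ = sup over unit vectors x ∈ H of { ⟨f′(B)·B x, x⟩ − ⟨A x, x⟩ · ⟨f′(B) x, x⟩ }. Then f(B) ≤ f(A) + γ · 1_H. -/

import Mathlib

open scoped ComplexInnerProductSpace

lemma grad_ineq {J : Set ℝ} {f f' : ℝ → ℝ} (hconv : ConvexOn ℝ J f)
    (hderiv : ∀ t ∈ J, HasDerivWithinAt f (f' t) J t) {s t : ℝ} (hs : s ∈ J) (ht : t ∈ J) :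
    f s + f' s * (t - s) ≤ f t := by
  rcases lt_trichotomy s t with h | rfl | h
  · have := hconv.le_slope_of_hasDerivWithinAt hs ht h (hderiv s hs)
    rw [slope_def_field] at this
    have h' : 0 < t - s := by linarith
    nlinarith [(le_div_iff₀ h').mp this]
  · simp
  · have := hconv.slope_le_of_hasDerivWithinAt ht hs h (hderiv s hs)
    rw [slope_def_field] at this
    have h' : 0 < s - t := by linarith
    nlinarith [(div_le_iff₀ h').mp this]

section Hilbert

variable {H : Type*} [NormedAddCommGroup H] [InnerProductSpace ℂ H] [CompleteSpace H]

lemma inner_mono' {S T : H →L[ℂ] H} (h : S ≤ T) (x : H) :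
    (⟪S x, x⟫).re ≤ (⟪T x, x⟫).re := by
  have := ((ContinuousLinearMap.le_def S T).mp h).inner_nonneg_left x
  simp only [ContinuousLinearMap.sub_apply, inner_sub_left, map_sub, RCLike.re_to_complex] at this
  have h2 := (Complex.le_def.mp this).1
  simp only [Complex.zero_re, Complex.sub_re] at h2
  linarith

omit [CompleteSpace H] in
lemma re_inner_real_smul (r : ℝ) (y x : H) : (⟪(r • y : H), x⟫).re = r * (⟪y, x⟫).re := by
  rw [show (r • y : H) = (r : ℂ) • y from (algebraMap_smul ℂ r y).symm, inner_smul_left]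
  simp

omit [CompleteSpace H] in
lemma re_inner_real_smul_right (r : ℝ) (y x : H) : (⟪y, (r • x : H)⟫).re = r * (⟪y, x⟫).re := by
  rw [show (r • x : H) = (r : ℂ) • x from (algebraMap_smul ℂ r x).symm, inner_smul_right]
  simp

omit [CompleteSpace H] in
lemma re_inner_add_apply (S T : H →L[ℂ] H) (x : H) :
    (⟪(S + T) x, x⟫).re = (⟪S x, x⟫).re + (⟪T x, x⟫).re := by
  rw [ContinuousLinearMap.add_apply, inner_add_left]; simp

omit [CompleteSpace H] in
lemma re_inner_sub_apply (S T : H →L[ℂ] H) (x : H) :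
    (⟪(S - T) x, x⟫).re = (⟪S x, x⟫).re - (⟪T x, x⟫).re := by
  rw [ContinuousLinearMap.sub_apply, inner_sub_left]; simp

omit [CompleteSpace H] in
lemma re_inner_smul_apply (r : ℝ) (S : H →L[ℂ] H) (x : H) :
    (⟪(r • S) x, x⟫).re = r * (⟪S x, x⟫).re := by
  rw [ContinuousLinearMap.smul_apply, re_inner_real_smul]

omit [CompleteSpace H] in
lemma re_inner_one_smul (r : ℝ) (x : H) (hx : ‖x‖ = 1) :
    (⟪((r • (1 : H →L[ℂ] H)) x : H), x⟫).re = r := by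
  rw [re_inner_smul_apply, ContinuousLinearMap.one_apply, inner_self_eq_norm_sq_to_K]
  simp [hx]

omit [CompleteSpace H] in
lemma nonneg_re_inner_of_unit {D : H →L[ℂ] H} (h : ∀ u : H, ‖u‖ = 1 → 0 ≤ (⟪D u, u⟫).re)
    (x : H) : 0 ≤ (⟪D x, x⟫).re := by
  rcases eq_or_ne x 0 with rfl | hx0
  · simp
  · have hnx : (0:ℝ) < ‖x‖ := norm_pos_iff.mpr hx0
    set u := (‖x‖ : ℝ)⁻¹ • x with hu
    have hu1 : ‖u‖ = 1 := by
      rw [hu, norm_smul]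
      simp [abs_of_pos (inv_pos.mpr hnx), inv_mul_cancel₀ (ne_of_gt hnx)]
    have hxu : x = (‖x‖ : ℝ) • u := by
      rw [hu, smul_smul, mul_inv_cancel₀ (ne_of_gt hnx), one_smul]
    have e : (⟪D x, x⟫).re = ‖x‖ * (‖x‖ * (⟪D u, u⟫).re) := by
      conv_lhs => rw [hxu, D.map_smul_of_tower, re_inner_real_smul,
        re_inner_real_smul_right]
    rw [e]
    have := h u hu1
    positivity

lemma inner_range_mem (A : H →L[ℂ] H) (hA : IsSelfAdjoint A) {J : Set ℝ} (hJ : Convex ℝ J)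
    (hspec : spectrum ℝ A ⊆ J) {x : H} (hx : ‖x‖ = 1) [Nontrivial H] :
    (⟪A x, x⟫).re ∈ J := by
  have hne : (spectrum ℝ A).Nonempty := hA.spectrum_nonempty
  have hcpt : IsCompact (spectrum ℝ A) := spectrum.isCompact A
  have hm : sInf (spectrum ℝ A) ∈ spectrum ℝ A := hcpt.sInf_mem hne
  have hM : sSup (spectrum ℝ A) ∈ spectrum ℝ A := hcpt.sSup_mem hne
  have h1 : algebraMap ℝ (H →L[ℂ] H) (sInf (spectrum ℝ A)) ≤ A :=
    algebraMap_le_of_le_spectrum (fun t ht => csInf_le hcpt.bddBelow ht)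
  have h2 : A ≤ algebraMap ℝ (H →L[ℂ] H) (sSup (spectrum ℝ A)) :=
    le_algebraMap_of_spectrum_le (fun t ht => le_csSup hcpt.bddAbove ht)
  have e : ∀ r : ℝ, (⟪(algebraMap ℝ (H →L[ℂ] H) r) x, x⟫).re = r := by
    intro r
    rw [Algebra.algebraMap_eq_smul_one]
    exact re_inner_one_smul r x hx
  have l1 := inner_mono' h1 x
  have l2 := inner_mono' h2 x
  rw [e] at l1
  rw [e] at l2
  exact hJ.ordConnected.out (hspec hm) (hspec hM) ⟨l1, l2⟩

end Hilbert

/-- **Corollary 2.4.** For self-adjoint `A`, `B` with spectra in an interval `J` and a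
continuously differentiable convex `f`, one has `f(B) ≤ f(A) + γ·1` with
`γ = sup_{‖x‖=1} { ⟨f′(B)B x, x⟩ − ⟨A x, x⟩⟨f′(B) x, x⟩ }`. -/
theorem stmt_4
    {H : Type*} [NormedAddCommGroup H] [InnerProductSpace ℂ H] [CompleteSpace H]
    (A B : H →L[ℂ] H)
    (hA : IsSelfAdjoint A) (hB : IsSelfAdjoint B)
    (J : Set ℝ)
    (hAspec : spectrum ℝ A ⊆ J) (hBspec : spectrum ℝ B ⊆ J)
    (f f' : ℝ → ℝ) (hconv : ConvexOn ℝ J f)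
    (hderiv : ∀ t ∈ J, HasDerivWithinAt f (f' t) J t) (hf'cont : ContinuousOn f' J)
    (γ : ℝ)
    (hγ : γ = sSup {c : ℝ | ∃ x : H, ‖x‖ = 1 ∧
      c = (⟪((cfc f' B) * B) x, x⟫).re - (⟪A x, x⟫).re * (⟪(cfc f' B) x, x⟫).re}) :
    cfc f B ≤ cfc f A + γ • (1 : H →L[ℂ] H) := by
  rcases subsingleton_or_nontrivial H with hsub | hnt
  · exact le_of_eq (Subsingleton.elim _ _)
  have hfJ : ContinuousOn f J := fun t ht => (hderiv t ht).continuousWithinAt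
  have hfB : ContinuousOn f (spectrum ℝ B) := hfJ.mono hBspec
  have hfA : ContinuousOn f (spectrum ℝ A) := hfJ.mono hAspec
  have hf'B : ContinuousOn f' (spectrum ℝ B) := hf'cont.mono hBspec
  set T := cfc f' B with hTdef
  set γS := {c : ℝ | ∃ x : H, ‖x‖ = 1 ∧
      c = (⟪(T * B) x, x⟫).re - (⟪A x, x⟫).re * (⟪T x, x⟫).re} with hγS
  have hbdd : BddAbove γS := by
    refine ⟨‖T * B‖ + ‖A‖ * ‖T‖, ?_⟩
    rintro c ⟨x, hx, rfl⟩
    have b1 : ∀ S : H →L[ℂ] H, |(⟪S x, x⟫).re| ≤ ‖S‖ := by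
      intro S
      calc |(⟪S x, x⟫).re| ≤ ‖(⟪S x, x⟫ : ℂ)‖ := Complex.abs_re_le_norm _
        _ ≤ ‖S x‖ * ‖x‖ := norm_inner_le_norm _ _
        _ ≤ (‖S‖ * ‖x‖) * ‖x‖ :=
            mul_le_mul_of_nonneg_right (S.le_opNorm x) (norm_nonneg x)
        _ = ‖S‖ := by rw [hx]; ring
    have h1 : (⟪(T * B) x, x⟫).re ≤ ‖T * B‖ := le_of_abs_le (b1 _)
    have h2 : -((⟪A x, x⟫).re * (⟪T x, x⟫).re) ≤ ‖A‖ * ‖T‖ := by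
      calc -((⟪A x, x⟫).re * (⟪T x, x⟫).re) ≤ |(⟪A x, x⟫).re * (⟪T x, x⟫).re| := neg_le_abs _
        _ = |(⟪A x, x⟫).re| * |(⟪T x, x⟫).re| := abs_mul _ _
        _ ≤ ‖A‖ * ‖T‖ := mul_le_mul (b1 A) (b1 T) (abs_nonneg _) (norm_nonneg _)
    linarith
  have key : ∀ x : H, ‖x‖ = 1 →
      (⟪(cfc f B) x, x⟫).re ≤ (⟪(cfc f A) x, x⟫).re + γ := by
    intro x hx
    set t₀ := (⟪A x, x⟫).re with ht₀def
    have ht₀ : t₀ ∈ J := inner_range_mem A hA hconv.1 hAspec hx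
    have contg1 : ContinuousOn (fun s : ℝ => f t₀ - t₀ * f' s) (spectrum ℝ B) :=
      continuousOn_const.sub (continuousOn_const.mul hf'B)
    have contg2 : ContinuousOn (fun s : ℝ => f' s * s) (spectrum ℝ B) :=
      hf'B.mul continuousOn_id
    have hsplit : cfc (fun s => (f t₀ - t₀ * f' s) + f' s * s) B
        = (f t₀) • (1 : H →L[ℂ] H) - t₀ • T + T * B := by
      rw [cfc_add B _ _ contg1 contg2,
        cfc_sub (fun _ => f t₀) (fun s => t₀ * f' s) B continuousOn_const (continuousOn_const.mul hf'B),
        cfc_const_mul t₀ f' B hf'B, cfc_const (f t₀) B hB,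
        cfc_mul f' (fun s => s) B hf'B continuousOn_id, cfc_id' ℝ B hB,
        Algebra.algebraMap_eq_smul_one]
    have opA : cfc f B ≤ (f t₀) • (1 : H →L[ℂ] H) - t₀ • T + T * B := by
      rw [← hsplit]
      refine cfc_mono (fun s hs => ?_) hfB (contg1.add contg2)
      have := grad_ineq hconv hderiv (hBspec hs) ht₀
      nlinarith [this]
    have hsplit2 : cfc (fun t => (f t₀ - f' t₀ * t₀) + f' t₀ * t) A
        = (f t₀ - f' t₀ * t₀) • (1 : H →L[ℂ] H) + (f' t₀) • A := by
      have contg3 : ContinuousOn (fun t : ℝ => f' t₀ * t) (spectrum ℝ A) :=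
        continuousOn_const.mul (by fun_prop)
      have contg4 : ContinuousOn (fun t : ℝ => t) (spectrum ℝ A) := by fun_prop
      rw [cfc_add A _ _ continuousOn_const contg3,
        cfc_const_mul (f' t₀) (fun t => t) A contg4,
        cfc_const _ A hA, cfc_id' ℝ A hA, Algebra.algebraMap_eq_smul_one]
    have opB : (f t₀ - f' t₀ * t₀) • (1 : H →L[ℂ] H) + (f' t₀) • A ≤ cfc f A := by
      rw [← hsplit2]
      refine cfc_mono (fun t ht => ?_)
        (continuousOn_const.add (continuousOn_const.mul continuousOn_id)) hfA
      have := grad_ineq hconv hderiv ht₀ (hAspec ht)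
      nlinarith [this]
    have iA := inner_mono' opA x
    have iB := inner_mono' opB x
    rw [re_inner_add_apply, re_inner_sub_apply, re_inner_one_smul _ x hx,
      re_inner_smul_apply] at iA
    rw [re_inner_add_apply, re_inner_one_smul _ x hx, re_inner_smul_apply, ← ht₀def] at iB
    have hc : (⟪(T * B) x, x⟫).re - t₀ * (⟪T x, x⟫).re ≤ γ := by
      rw [hγ]
      exact le_csSup hbdd ⟨x, hx, by rw [← ht₀def]⟩
    have hft : f t₀ ≤ (⟪(cfc f A) x, x⟫).re := by linarith
    linarith
  rw [ContinuousLinearMap.le_def]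
  have hsa : IsSelfAdjoint (cfc f A + γ • (1 : H →L[ℂ] H) - cfc f B) := by
    have h1 : IsSelfAdjoint (cfc f A) := cfc_predicate f A
    have h2 : IsSelfAdjoint (cfc f B) := cfc_predicate f B
    have h3 : IsSelfAdjoint (γ • (1 : H →L[ℂ] H)) := by
      rw [IsSelfAdjoint, star_smul, star_trivial, star_one]
    exact (h1.add h3).sub h2
  refine ⟨hsa.isSymmetric, fun x => ?_⟩
  have : ∀ u : H, ‖u‖ = 1 →
      0 ≤ (⟪(cfc f A + γ • (1 : H →L[ℂ] H) - cfc f B) u, u⟫).re := by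
    intro u hu
    rw [re_inner_sub_apply, re_inner_add_apply, re_inner_one_smul γ u hu]
    have := key u hu
    linarith
  exact nonneg_re_inner_of_unit this x
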